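/- arXiv:2311.01216 — 6 statements merged into one kernel-verified Lean document; each statement's English description precedes it below -/
import Mathlib

section
/- Three-points inequality: let φ : ℝⁿ → ℝ be M-weakly convex for some M ∈ ℝ, let z ∈ ℝⁿ, and let z⁺ ∈ ℝⁿ be a minimizer over ℝⁿ of the function u ↦ φ(u) + (1/2)‖u − z‖². Then for every x ∈ ℝⁿ, φ(x) + (1/2)‖x−z‖² ≥ φ(z⁺) + (1/2)‖z⁺−z‖² + ((1−M)/2)‖x−z⁺‖². -/
/-!
Adding `½‖· − z‖²` to an `M`-weakly convex function yields a `(1 − M)`-strongly convex one, and a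
minimizer `p` of an `m`-strongly convex `f` satisfies `f x ≥ f p + (m/2)‖x − p‖²`: compare `f p`
with the values of `f` on the segment from `p` to `x`, and let the point of the segment tend to `p`.
-/

open RealInnerProductSpace

open Filter Topology Set in
lemma add_le_of_forall_mem_Ioc_add_mul_le {a b c : ℝ}
    (h : ∀ t ∈ Ioc (0 : ℝ) 1, a + (1 - t) * b ≤ c) : a + b ≤ c := by
  have hlim : Tendsto (fun t : ℝ => a + (1 - t) * b) (𝓝[>] 0) (𝓝 (a + b)) := by
    have hcont : Continuous fun t : ℝ => a + (1 - t) * b := by fun_prop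
    exact (hcont.tendsto' 0 _ (by ring)).mono_left nhdsWithin_le_nhds
  exact le_of_tendsto hlim (eventually_of_mem (Ioc_mem_nhdsGT one_pos) h)

section

variable {E : Type*} [NormedAddCommGroup E] [NormedSpace ℝ E] {s : Set E} {m : ℝ} {f : E → ℝ}
  {p x : E}

lemma StrongConvexOn.add_sq_norm_sub_le_of_isMinOn (hf : StrongConvexOn s m f)
    (hmin : IsMinOn f s p) (hp : p ∈ s) (hx : x ∈ s) : f p + m / 2 * ‖x - p‖ ^ 2 ≤ f x := by
  refine add_le_of_forall_mem_Ioc_add_mul_le fun t ⟨ht0, ht1⟩ => ?_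
  have hsegment := hf.2 hp hx (sub_nonneg.2 ht1) ht0.le (sub_add_cancel 1 t)
  have hmin_segment : f p ≤ f ((1 - t) • p + t • x) :=
    hmin (hf.1 hp hx (sub_nonneg.2 ht1) ht0.le (sub_add_cancel 1 t))
  simp only [smul_eq_mul, norm_sub_rev p x] at hsegment
  refine le_of_mul_le_mul_left ?_ ht0
  linarith

end

section

variable {E : Type*} [NormedAddCommGroup E] [InnerProductSpace ℝ E] {s : Set E} {φ : E → ℝ}
  {M : ℝ}

lemma ConvexOn.strongConvexOn_add_sq_norm_sub (hφ : ConvexOn ℝ s fun x => φ x + M / 2 * ‖x‖ ^ 2)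
    (ρ : ℝ) (z : E) : StrongConvexOn s (ρ - M) fun u => φ u + ρ / 2 * ‖u - z‖ ^ 2 := by
  rw [strongConvexOn_iff_convex]
  have hsplit : (fun u => φ u + ρ / 2 * ‖u - z‖ ^ 2 - (ρ - M) / 2 * ‖u‖ ^ 2) =
      fun u => (φ u + M / 2 * ‖u‖ ^ 2) + (-ρ * ⟪z, u⟫ + ρ / 2 * ‖z‖ ^ 2) := by
    ext u
    rw [norm_sub_sq_real, real_inner_comm]
    ring
  rw [hsplit]
  exact hφ.add (((-ρ) • innerₛₗ ℝ z).convexOn hφ.1 |>.add_const _)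

end

/-- Three-points inequality: if `φ` is `M`-weakly convex and `z⁺` minimizes
`u ↦ φ(u) + (1/2)‖u − z‖²` over `ℝⁿ`, then for every `x`,
`φ(x) + (1/2)‖x−z‖² ≥ φ(z⁺) + (1/2)‖z⁺−z‖² + ((1−M)/2)‖x−z⁺‖²`. -/
theorem three_points_inequality {n : ℕ}
    (φ : EuclideanSpace ℝ (Fin n) → ℝ) (M : ℝ)
    (hφ : ConvexOn ℝ Set.univ (fun x => φ x + M / 2 * ‖x‖ ^ 2))
    (z zp : EuclideanSpace ℝ (Fin n))
    (hzp : ∀ u, φ zp + 1 / 2 * ‖zp - z‖ ^ 2 ≤ φ u + 1 / 2 * ‖u - z‖ ^ 2) :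
    ∀ x, φ x + 1 / 2 * ‖x - z‖ ^ 2 ≥
      φ zp + 1 / 2 * ‖zp - z‖ ^ 2 + (1 - M) / 2 * ‖x - zp‖ ^ 2 := fun x =>
  (hφ.strongConvexOn_add_sq_norm_sub 1 z).add_sq_norm_sub_le_of_isMinOn
    (fun u _ => hzp u) (Set.mem_univ zp) (Set.mem_univ x)
end

section
/- Let g : ℝⁿ → ℝ be differentiable with ∇g L-Lipschitz for some 0 ≤ L < 1, and set D = Id − ∇g. Then for all u, v ∈ ℝⁿ, ‖∇g(u) − ∇g(v)‖ ≤ (L/(1−L))·‖D(u) − D(v)‖. (This expresses that the potential φ with D = Prox_φ has an (L/(1−L))-Lipschitz gradient on the image of D.) -/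
section PerturbationOfIdentity

variable {E : Type*} [SeminormedAddCommGroup E] {f : E → E} {L : ℝ}

theorem one_sub_mul_norm_sub_le_norm_sub_sub (hf : ∀ u v, ‖f u - f v‖ ≤ L * ‖u - v‖) (u v : E) :
    (1 - L) * ‖u - v‖ ≤ ‖(u - f u) - (v - f v)‖ := by
  have hsplit : u - v = ((u - f u) - (v - f v)) + (f u - f v) := by abel
  have htri : ‖u - v‖ ≤ ‖(u - f u) - (v - f v)‖ + ‖f u - f v‖ :=
    hsplit ▸ norm_add_le _ _
  linarith [hf u v]

theorem norm_sub_le_div_one_sub_mul_norm_sub_sub (hL0 : 0 ≤ L) (hL1 : L < 1)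
    (hf : ∀ u v, ‖f u - f v‖ ≤ L * ‖u - v‖) (u v : E) :
    ‖f u - f v‖ ≤ L / (1 - L) * ‖(u - f u) - (v - f v)‖ := by
  have h1L : 0 < 1 - L := sub_pos.mpr hL1
  calc ‖f u - f v‖ ≤ L * ‖u - v‖ := hf u v
    _ = L / (1 - L) * ((1 - L) * ‖u - v‖) := by field_simp
    _ ≤ L / (1 - L) * ‖(u - f u) - (v - f v)‖ := by
      gcongr
      exact one_sub_mul_norm_sub_le_norm_sub_sub hf u v

end PerturbationOfIdentity

theorem gradient_lipschitz_on_image_general {n : ℕ}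
    (g' : EuclideanSpace ℝ (Fin n) → EuclideanSpace ℝ (Fin n))
    (L : ℝ) (hL0 : 0 ≤ L) (hL1 : L < 1)
    (hlip : ∀ u v, ‖g' u - g' v‖ ≤ L * ‖u - v‖)
    (D : EuclideanSpace ℝ (Fin n) → EuclideanSpace ℝ (Fin n))
    (hD : ∀ x, D x = x - g' x) :
    ∀ u v, ‖g' u - g' v‖ ≤ L / (1 - L) * ‖D u - D v‖ := by
  intro u v
  rw [hD, hD]
  exact norm_sub_le_div_one_sub_mul_norm_sub_sub hL0 hL1 hlip u v

/-- for `g` differentiable with `∇g` `L`-Lipschitz, `0 ≤ L < 1`, and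
`D = Id − ∇g`, one has `‖∇g(u) − ∇g(v)‖ ≤ (L/(1−L))·‖D(u) − D(v)‖` for all `u, v`. -/
theorem gradient_lipschitz_on_image {n : ℕ}
    (g : EuclideanSpace ℝ (Fin n) → ℝ)
    (g' : EuclideanSpace ℝ (Fin n) → EuclideanSpace ℝ (Fin n))
    (L : ℝ) (hL0 : 0 ≤ L) (hL1 : L < 1)
    (hg : ∀ x, HasGradientAt g (g' x) x)
    (hlip : ∀ u v, ‖g' u - g' v‖ ≤ L * ‖u - v‖)
    (D : EuclideanSpace ℝ (Fin n) → EuclideanSpace ℝ (Fin n))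
    (hD : ∀ x, D x = x - g' x) :
    ∀ u v, ‖g' u - g' v‖ ≤ L / (1 - L) * ‖D u - D v‖ :=
  gradient_lipschitz_on_image_general g' L hL0 hL1 hlip D hD
end

section
/- Proximal characterization of the gradient-step denoiser: let g : ℝⁿ → ℝ be differentiable with ∇g L-Lipschitz for some 0 ≤ L < 1, set D = Id − ∇g, h(x) = (1/2)‖x‖² − g(x), and define φ : ℝⁿ → ℝ by φ(x) = sup_{y ∈ ℝⁿ} ( ⟨x, y⟩ − h(y) ) − (1/2)‖x‖². Then: (a) for every x the supremum is finite (the set {⟨x,y⟩ − h(y) : y ∈ ℝⁿ} is bounded above); (b) φ is (L/(L+1))-weakly convex, i.e. x ↦ φ(x) + (L/(2(L+1)))‖x‖² is convex; (c) for every x ∈ ℝⁿ, D(x) is the unique minimizer over ℝⁿ of u ↦ φ(u) + (1/2)‖u − x‖², i.e. D = Prox_φ. -/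
/-!
With `h = ½‖·‖² − g`, the Lipschitz bound on `∇g` squeezes `h` between its tangent plane and a
paraboloid: for `D = ∇h = Id − ∇g`,
`h u + ⟪D u, y - u⟫ ≤ h y ≤ h u + ⟪D u, y - u⟫ + (1 + L)/2 ‖y - u‖²`.
The lower bound says that the supremum defining `h* (D u)` is attained at `u`; since `D` is onto
(Banach's fixed point theorem for `z + ∇g`), `h*` is finite everywhere. Testing the supremum of
`h* x` at the maximiser of the upper model gives the quadratic growth
`h* x ≥ h* (D u) + ⟪x - D u, u⟫ + ‖x - D u‖² / (2(1 + L))`, so `h*` is `1/(1 + L)`-strongly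
convex, which is the weak convexity of `φ = h* − ½‖·‖²`. Finally
`φ w + ½‖w - x‖² = h* w − ⟪w, x⟫ + ½‖x‖²`, and the same growth inequality at `u = x` shows that
`D x` is its strict minimiser.
-/

open RealInnerProductSpace Set Function
open scoped NNReal

variable {E : Type*} [NormedAddCommGroup E]

lemma surjective_sub_of_lipschitzWith [CompleteSpace E] {f : E → E} {K : ℝ≥0}
    (hf : LipschitzWith K f) (hK : K < 1) : Surjective fun x => x - f x := fun z => by
  have hcontr : ContractingWith K fun u => z + f u :=
    ⟨hK, LipschitzWith.of_dist_le_mul fun a b => by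
      simpa only [dist_add_left] using hf.dist_le_mul a b⟩
  obtain ⟨u, hu, -⟩ := hcontr.exists_fixedPoint z (edist_ne_top _ _)
  exact ⟨u, sub_eq_of_eq_add hu.symm⟩

variable [InnerProductSpace ℝ E]

lemma half_sq_norm_sub_half_sq_norm_sub_inner (x y : E) :
    1 / 2 * ‖y‖ ^ 2 - 1 / 2 * ‖x‖ ^ 2 - ⟪x, y - x⟫ = 1 / 2 * ‖y - x‖ ^ 2 := by
  rw [norm_sub_sq_real, inner_sub_right, real_inner_self_eq_norm_sq, real_inner_comm]
  ring

lemma convexOn_univ_of_forall_exists_le_add_inner {f : E → ℝ}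
    (hf : ∀ z, ∃ v, ∀ x, f z + ⟪x - z, v⟫ ≤ f x) : ConvexOn ℝ univ f := by
  refine ⟨convex_univ, fun x _ y _ a b ha hb hab => ?_⟩
  obtain ⟨v, hv⟩ := hf (a • x + b • y)
  have hbalance : a * ⟪x - (a • x + b • y), v⟫ + b * ⟪y - (a • x + b • y), v⟫ = 0 := by
    rw [← real_inner_smul_left, ← real_inner_smul_left, ← inner_add_left, smul_sub, smul_sub,
      sub_add_sub_comm, ← add_smul, hab, one_smul, sub_self, inner_zero_left]
  have hsplit : f (a • x + b • y) = a * f (a • x + b • y) + b * f (a • x + b • y) := by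
    rw [← add_mul, hab, one_mul]
  simp only [smul_eq_mul]
  linarith [mul_le_mul_of_nonneg_left (hv x) ha, mul_le_mul_of_nonneg_left (hv y) hb]

noncomputable def fenchelConjugate (h : E → ℝ) (x : E) : ℝ := ⨆ y, ⟪x, y⟫ - h y

section Conjugate

variable {h : E → ℝ} {D : E → E} {M : ℝ}

lemma isGreatest_range_inner_sub (hlow : ∀ u y, h u + ⟪D u, y - u⟫ ≤ h y) (u : E) :
    IsGreatest (range fun y => ⟪D u, y⟫ - h y) (⟪D u, u⟫ - h u) := by
  refine ⟨mem_range_self u, ?_⟩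
  rintro _ ⟨y, rfl⟩
  have hy := hlow u y
  rw [inner_sub_right] at hy
  show ⟪D u, y⟫ - h y ≤ _
  linarith

lemma fenchelConjugate_apply_eq_inner_sub (hlow : ∀ u y, h u + ⟪D u, y - u⟫ ≤ h y) (u : E) :
    fenchelConjugate h (D u) = ⟪D u, u⟫ - h u :=
  (isGreatest_range_inner_sub hlow u).csSup_eq

lemma bddAbove_range_inner_sub (hlow : ∀ u y, h u + ⟪D u, y - u⟫ ≤ h y) (hD : Surjective D)
    (x : E) : BddAbove (range fun y => ⟪x, y⟫ - h y) := by
  obtain ⟨u, rfl⟩ := hD x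
  exact (isGreatest_range_inner_sub hlow u).bddAbove

lemma fenchelConjugate_apply_add_inner_add_sq_le (hlow : ∀ u y, h u + ⟪D u, y - u⟫ ≤ h y)
    (hup : ∀ u y, h y ≤ h u + ⟪D u, y - u⟫ + M / 2 * ‖y - u‖ ^ 2) (hM : 0 < M) {x : E}
    (hx : BddAbove (range fun y => ⟪x, y⟫ - h y)) (u : E) :
    fenchelConjugate h (D u) + ⟪x - D u, u⟫ + M⁻¹ / 2 * ‖x - D u‖ ^ 2 ≤ fenchelConjugate h x := by
  set d := x - D u
  -- `u + M⁻¹ • d` maximises `⟪x, y⟫` minus the paraboloid bounding `h` from above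
  have hw : ⟪x, u + M⁻¹ • d⟫ - h (u + M⁻¹ • d) ≤ fenchelConjugate h x := le_ciSup hx _
  have hhw := hup u (u + M⁻¹ • d)
  rw [add_sub_cancel_left, norm_smul, real_inner_smul_right,
    Real.norm_of_nonneg (by positivity)] at hhw
  have hxd : ⟪x, d⟫ = ⟪D u, d⟫ + ‖d‖ ^ 2 := by
    rw [← real_inner_self_eq_norm_sq, ← inner_add_left, add_sub_cancel]
  have hxu : ⟪x, u⟫ = ⟪D u, u⟫ + ⟪d, u⟫ := by
    rw [← inner_add_left, add_sub_cancel]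
  have hscal : M⁻¹ * ‖d‖ ^ 2 - M / 2 * (M⁻¹ * ‖d‖) ^ 2 = M⁻¹ / 2 * ‖d‖ ^ 2 := by
    field_simp
    ring
  rw [inner_add_right, real_inner_smul_right, hxd, hxu] at hw
  rw [fenchelConjugate_apply_eq_inner_sub hlow]
  linarith

lemma strongConvexOn_fenchelConjugate (hlow : ∀ u y, h u + ⟪D u, y - u⟫ ≤ h y)
    (hup : ∀ u y, h y ≤ h u + ⟪D u, y - u⟫ + M / 2 * ‖y - u‖ ^ 2) (hM : 0 < M)
    (hD : Surjective D) : StrongConvexOn univ M⁻¹ (fenchelConjugate h) := by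
  refine strongConvexOn_iff_convex.2 (convexOn_univ_of_forall_exists_le_add_inner fun z => ?_)
  obtain ⟨u, rfl⟩ := hD z
  refine ⟨u - M⁻¹ • D u, fun x => ?_⟩
  have hgrowth := fenchelConjugate_apply_add_inner_add_sq_le hlow hup hM
    (bddAbove_range_inner_sub hlow hD x) u
  have hnorm : ‖x‖ ^ 2 = ‖D u‖ ^ 2 + 2 * ⟪x - D u, D u⟫ + ‖x - D u‖ ^ 2 := by
    have hsplit := norm_add_sq_real (D u) (x - D u)
    rw [add_sub_cancel] at hsplit
    rw [hsplit, real_inner_comm]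
  rw [inner_sub_right, real_inner_smul_right, hnorm]
  linarith

end Conjugate

section Gradient

variable [CompleteSpace E] {g : E → ℝ} {g' : E → E} {L : ℝ}

lemma sub_sub_inner_le_of_lipschitz_gradient (hg : ∀ x, HasGradientAt g (g' x) x)
    (hlip : ∀ u v, ‖g' u - g' v‖ ≤ L * ‖u - v‖) (x y : E) :
    g y - g x - ⟪g' x, y - x⟫ ≤ L / 2 * ‖y - x‖ ^ 2 := by
  set v := y - x
  let ψ : ℝ → ℝ := fun t => g (x + t • v) - t * ⟪g' x, v⟫ - L / 2 * t ^ 2 * ‖v‖ ^ 2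
  have hψ : ∀ t, HasDerivAt ψ (⟪g' (x + t • v), v⟫ - ⟪g' x, v⟫ - L * t * ‖v‖ ^ 2) t := by
    intro t
    have hline : HasDerivAt (fun t : ℝ => x + t • v) v t := by
      simpa using ((hasDerivAt_id t).smul_const v).const_add x
    have hgline := (hg (x + t • v)).hasFDerivAt.comp_hasDerivAt t hline
    rw [InnerProductSpace.toDual_apply_apply] at hgline
    refine ((hgline.sub ((hasDerivAt_id t).mul_const ⟪g' x, v⟫)).sub
      (((hasDerivAt_pow 2 t).const_mul (L / 2)).mul_const (‖v‖ ^ 2))).congr_deriv ?_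
    rw [Nat.add_one_sub_one, pow_one, Nat.cast_ofNat]
    ring
  have hslope : ∀ t ∈ interior (Icc (0 : ℝ) 1),
      ⟪g' (x + t • v), v⟫ - ⟪g' x, v⟫ - L * t * ‖v‖ ^ 2 ≤ 0 := by
    intro t ht
    rw [interior_Icc] at ht
    have hcs := real_inner_le_norm (g' (x + t • v) - g' x) v
    have hgt := hlip (x + t • v) x
    rw [add_sub_cancel_left, norm_smul, Real.norm_of_nonneg ht.1.le] at hgt
    rw [inner_sub_left] at hcs
    linarith [mul_le_mul_of_nonneg_right hgt (norm_nonneg v)]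
  have hanti := antitoneOn_of_hasDerivWithinAt_nonpos (convex_Icc 0 1)
    (fun t _ => (hψ t).continuousAt.continuousWithinAt) (fun t _ => (hψ t).hasDerivWithinAt)
    hslope
  have hends := hanti (left_mem_Icc.2 zero_le_one) (right_mem_Icc.2 zero_le_one) zero_le_one
  simp only [ψ, v, zero_smul, add_zero, one_smul, add_sub_cancel] at hends
  linarith

lemma neg_le_sub_sub_inner_of_lipschitz_gradient (hg : ∀ x, HasGradientAt g (g' x) x)
    (hlip : ∀ u v, ‖g' u - g' v‖ ≤ L * ‖u - v‖) (x y : E) :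
    -(L / 2 * ‖y - x‖ ^ 2) ≤ g y - g x - ⟪g' x, y - x⟫ := by
  have hneg := sub_sub_inner_le_of_lipschitz_gradient (L := L) (g := fun x => -g x)
    (g' := fun x => -g' x)
    (fun x => hasGradientAt_iff_hasFDerivAt.2 (by rw [map_neg]; exact (hg x).hasFDerivAt.neg))
    (fun u v => by rw [neg_sub_neg, norm_sub_rev]; exact hlip u v) x y
  rw [inner_neg_left] at hneg
  linarith

lemma add_inner_le_half_sq_norm_sub (hg : ∀ x, HasGradientAt g (g' x) x)
    (hlip : ∀ u v, ‖g' u - g' v‖ ≤ L * ‖u - v‖) (hL : L ≤ 1) (u y : E) :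
    1 / 2 * ‖u‖ ^ 2 - g u + ⟪u - g' u, y - u⟫ ≤ 1 / 2 * ‖y‖ ^ 2 - g y := by
  have hdesc := sub_sub_inner_le_of_lipschitz_gradient hg hlip u y
  have hquad := half_sq_norm_sub_half_sq_norm_sub_inner u y
  have hL' : L / 2 * ‖y - u‖ ^ 2 ≤ 1 / 2 * ‖y - u‖ ^ 2 := by gcongr
  rw [inner_sub_left]
  linarith

lemma half_sq_norm_sub_le_add_inner_add_sq (hg : ∀ x, HasGradientAt g (g' x) x)
    (hlip : ∀ u v, ‖g' u - g' v‖ ≤ L * ‖u - v‖) (u y : E) :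
    1 / 2 * ‖y‖ ^ 2 - g y ≤
      1 / 2 * ‖u‖ ^ 2 - g u + ⟪u - g' u, y - u⟫ + (1 + L) / 2 * ‖y - u‖ ^ 2 := by
  have hdesc := neg_le_sub_sub_inner_of_lipschitz_gradient hg hlip u y
  have hquad := half_sq_norm_sub_half_sq_norm_sub_inner u y
  rw [inner_sub_left]
  linarith

end Gradient

/-- Proximal characterization of the gradient-step denoiser:
for `g` differentiable with `∇g` `L`-Lipschitz, `0 ≤ L < 1`, `D = Id − ∇g`,
`h(x) = (1/2)‖x‖² − g(x)` and `φ(x) = sup_y (⟪x,y⟫ − h(y)) − (1/2)‖x‖²`: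
(a) for every `x` the supremum is finite;
(b) `φ` is `(L/(L+1))`-weakly convex;
(c) for every `x`, `D(x)` is the unique minimizer of `u ↦ φ(u) + (1/2)‖u − x‖²`. -/
theorem proximal_characterization_gradient_step_denoiser {n : ℕ}
    (g : EuclideanSpace ℝ (Fin n) → ℝ)
    (g' : EuclideanSpace ℝ (Fin n) → EuclideanSpace ℝ (Fin n))
    (L : ℝ) (hL0 : 0 ≤ L) (hL1 : L < 1)
    (hg : ∀ x, HasGradientAt g (g' x) x)
    (hlip : ∀ u v, ‖g' u - g' v‖ ≤ L * ‖u - v‖)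
    (D : EuclideanSpace ℝ (Fin n) → EuclideanSpace ℝ (Fin n))
    (hD : ∀ x, D x = x - g' x)
    (h : EuclideanSpace ℝ (Fin n) → ℝ)
    (hh : ∀ x, h x = 1 / 2 * ‖x‖ ^ 2 - g x)
    (φ : EuclideanSpace ℝ (Fin n) → ℝ)
    (hφ : ∀ x, φ x = (⨆ y, (⟪x, y⟫ - h y)) - 1 / 2 * ‖x‖ ^ 2) :
    (∀ x, BddAbove (Set.range fun y => ⟪x, y⟫ - h y)) ∧
    ConvexOn ℝ Set.univ (fun x => φ x + L / (L + 1) / 2 * ‖x‖ ^ 2) ∧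
    (∀ x : EuclideanSpace ℝ (Fin n),
      (∀ u, φ (D x) + 1 / 2 * ‖D x - x‖ ^ 2 ≤ φ u + 1 / 2 * ‖u - x‖ ^ 2) ∧
      (∀ u, (∀ w, φ u + 1 / 2 * ‖u - x‖ ^ 2 ≤ φ w + 1 / 2 * ‖w - x‖ ^ 2) → u = D x)) := by
  have hM : 0 < 1 + L := by linarith
  have hlow : ∀ u y, h u + ⟪D u, y - u⟫ ≤ h y := fun u y => by
    rw [hh, hh, hD]; exact add_inner_le_half_sq_norm_sub hg hlip hL1.le u y
  have hup : ∀ u y, h y ≤ h u + ⟪D u, y - u⟫ + (1 + L) / 2 * ‖y - u‖ ^ 2 := fun u y => by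
    rw [hh, hh, hD]; exact half_sq_norm_sub_le_add_inner_add_sq hg hlip u y
  have hsurj : Surjective D := by
    rw [show D = fun x => x - g' x from funext hD]
    refine surjective_sub_of_lipschitzWith (LipschitzWith.of_dist_le_mul fun u v => ?_)
      (Real.toNNReal_lt_one.2 hL1)
    rw [dist_eq_norm, dist_eq_norm, Real.coe_toNNReal L hL0]
    exact hlip u v
  have hbdd := bddAbove_range_inner_sub hlow hsurj
  have hφc : ∀ x, φ x = fenchelConjugate h x - 1 / 2 * ‖x‖ ^ 2 := hφ
  have hobj : ∀ u x, φ u + 1 / 2 * ‖u - x‖ ^ 2 = fenchelConjugate h u - ⟪u, x⟫ + 1 / 2 * ‖x‖ ^ 2 :=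
    fun u x => by rw [hφc, norm_sub_sq_real]; ring
  have hgrowth : ∀ x u, φ (D x) + 1 / 2 * ‖D x - x‖ ^ 2 + (1 + L)⁻¹ / 2 * ‖u - D x‖ ^ 2
      ≤ φ u + 1 / 2 * ‖u - x‖ ^ 2 := fun x u => by
    have hkey := fenchelConjugate_apply_add_inner_add_sq_le hlow hup hM (hbdd u) x
    rw [inner_sub_left] at hkey
    rw [hobj, hobj]
    linarith
  refine ⟨hbdd, ?_, fun x => ⟨fun u => ?_, fun u hu => ?_⟩⟩
  · refine (strongConvexOn_iff_convex.1 (strongConvexOn_fenchelConjugate hlow hup hM hsurj)).congr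
      fun x _ => ?_
    rw [hφc]
    field_simp
    ring
  · exact le_trans (le_add_of_nonneg_right (by positivity)) (hgrowth x u)
  · have hsq : ‖u - D x‖ ^ 2 ≤ 0 := nonpos_of_mul_nonpos_right
      (by linarith [hgrowth x u, hu (D x)] : (1 + L)⁻¹ / 2 * _ ≤ 0) (by positivity)
    rwa [sq_nonpos_iff, norm_sub_eq_zero_iff] at hsq
end

section
/- Let g : ℝⁿ → ℝ be differentiable with ∇g L-Lipschitz for some 0 ≤ L < 1, set h(x) = (1/2)‖x‖² − g(x) and define φ : ℝⁿ → ℝ by φ(x) = sup_{y ∈ ℝⁿ} ( ⟨x, y⟩ − h(y) ) − (1/2)‖x‖². Then φ(x) ≥ g(x) for all x ∈ ℝⁿ, and if ∇g(x) = 0 (i.e. x is a fixed point of D = Id − ∇g) then φ(x) = g(x). -/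
/-!
Writing `⟪x, y⟫ - (½‖y‖² - g y) = ½‖x‖² + g y - ½‖y - x‖²`, the descent lemma
`g y ≤ g x + ⟪∇g x, y - x⟫ + (L/2)‖y - x‖²` bounds the function being maximised by
`½‖x‖² + g x + ⟪∇g x, y - x⟫ - ((1 - L)/2)‖y - x‖²`. Since `L < 1` this is bounded in `y`, so the
supremum is finite and dominates the value `½‖x‖² + g x` at `y = x`; if moreover `∇g x = 0`,
the bound is attained at `y = x`.
-/

open RealInnerProductSpace Set

variable {F : Type*} [NormedAddCommGroup F] [InnerProductSpace ℝ F] {g : F → ℝ} {g' : F → F}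
  {L : ℝ}

theorem inner_gradient_sub_le (hlip : ∀ u v, ‖g' u - g' v‖ ≤ L * ‖u - v‖) (x v : F) {t : ℝ}
    (ht : 0 ≤ t) : ⟪g' (x + t • v) - g' x, v⟫ ≤ L * t * ‖v‖ ^ 2 :=
  calc ⟪g' (x + t • v) - g' x, v⟫ ≤ ‖g' (x + t • v) - g' x‖ * ‖v‖ := real_inner_le_norm _ _
    _ ≤ L * ‖(x + t • v) - x‖ * ‖v‖ := by gcongr; exact hlip _ _
    _ = L * t * ‖v‖ ^ 2 := by
      rw [add_sub_cancel_left, norm_smul, Real.norm_of_nonneg ht]; ring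

variable [CompleteSpace F]

theorem hasDerivAt_comp_add_smul_of_hasGradientAt (hg : ∀ x, HasGradientAt g (g' x) x)
    (x v : F) (t : ℝ) :
    HasDerivAt (fun t : ℝ => g (x + t • v)) ⟪g' (x + t • v), v⟫ t := by
  have hline : HasDerivAt (fun t : ℝ => x + t • v) v t := by
    simpa using ((hasDerivAt_id t).smul_const v).const_add x
  have hcomp := (hg (x + t • v)).hasFDerivAt.comp_hasDerivAt t hline
  simp only [InnerProductSpace.toDual_apply_apply] at hcomp
  exact hcomp

theorem le_add_inner_add_of_lipschitz_gradient (hg : ∀ x, HasGradientAt g (g' x) x)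
    (hlip : ∀ u v, ‖g' u - g' v‖ ≤ L * ‖u - v‖) (x y : F) :
    g y ≤ g x + ⟪g' x, y - x⟫ + L / 2 * ‖y - x‖ ^ 2 := by
  set v := y - x
  let f : ℝ → ℝ := fun t => g (x + t • v) - t * ⟪g' x, v⟫ - L / 2 * t ^ 2 * ‖v‖ ^ 2
  have hf : ∀ t, HasDerivAt f (⟪g' (x + t • v) - g' x, v⟫ - L * t * ‖v‖ ^ 2) t := by
    intro t
    have hquad := ((hasDerivAt_pow 2 t).const_mul (L / 2)).mul_const (‖v‖ ^ 2)
    refine (((hasDerivAt_comp_add_smul_of_hasGradientAt hg x v t).sub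
      ((hasDerivAt_id t).mul_const ⟪g' x, v⟫)).sub hquad).congr_deriv ?_
    rw [inner_sub_left, Nat.cast_ofNat, pow_one]
    ring
  have hanti : AntitoneOn f (Ici 0) := by
    refine antitoneOn_of_hasDerivWithinAt_nonpos (convex_Ici 0)
      (fun t _ => (hf t).continuousAt.continuousWithinAt)
      (fun t _ => (hf t).hasDerivWithinAt) fun t ht => ?_
    rw [interior_Ici] at ht
    exact sub_nonpos.2 (inner_gradient_sub_le hlip x v (le_of_lt ht))
  have h01 : f 1 ≤ f 0 := hanti (mem_Ici.2 le_rfl) (mem_Ici.2 zero_le_one) zero_le_one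
  have hf0 : f 0 = g x := by simp [f]
  have hf1 : f 1 = g y - ⟪g' x, v⟫ - L / 2 * ‖v‖ ^ 2 := by simp [f, v]
  linarith

theorem inner_sub_half_sq_sub_le_of_lipschitz_gradient (hg : ∀ x, HasGradientAt g (g' x) x)
    (hlip : ∀ u v, ‖g' u - g' v‖ ≤ L * ‖u - v‖) (x y : F) :
    ⟪x, y⟫ - (1 / 2 * ‖y‖ ^ 2 - g y) ≤
      1 / 2 * ‖x‖ ^ 2 + g x + ⟪g' x, y - x⟫ - (1 - L) / 2 * ‖y - x‖ ^ 2 := by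
  have hdesc := le_add_inner_add_of_lipschitz_gradient hg hlip x y
  have hsq : ‖y - x‖ ^ 2 = ‖y‖ ^ 2 - 2 * ⟪y, x⟫ + ‖x‖ ^ 2 := norm_sub_sq_real y x
  rw [real_inner_comm x y] at hsq
  linarith

theorem bddAbove_range_inner_sub_half_sq_sub (hg : ∀ x, HasGradientAt g (g' x) x)
    (hlip : ∀ u v, ‖g' u - g' v‖ ≤ L * ‖u - v‖) (hL1 : L < 1) (x : F) :
    BddAbove (range fun y => ⟪x, y⟫ - (1 / 2 * ‖y‖ ^ 2 - g y)) := by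
  refine ⟨1 / 2 * ‖x‖ ^ 2 + g x + ‖g' x‖ ^ 2 / (2 * (1 - L)), forall_mem_range.2 fun y => ?_⟩
  have hc : 0 < 1 - L := sub_pos.2 hL1
  -- `a r - (c/2) r² ≤ a²/(2c)`, with `a = ‖∇g x‖`, `r = ‖y - x‖`, `c = 1 - L`
  have hquad : ‖g' x‖ * ‖y - x‖ - (1 - L) / 2 * ‖y - x‖ ^ 2 ≤ ‖g' x‖ ^ 2 / (2 * (1 - L)) := by
    rw [le_div_iff₀ (by positivity)]
    nlinarith [sq_nonneg (‖g' x‖ - (1 - L) * ‖y - x‖)]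
  linarith [inner_sub_half_sq_sub_le_of_lipschitz_gradient hg hlip x y,
    real_inner_le_norm (g' x) (y - x)]

theorem phi_ge_g_and_eq_at_fixed_points_general {n : ℕ}
    (g : EuclideanSpace ℝ (Fin n) → ℝ)
    (g' : EuclideanSpace ℝ (Fin n) → EuclideanSpace ℝ (Fin n))
    (L : ℝ) (hL1 : L < 1)
    (hg : ∀ x, HasGradientAt g (g' x) x)
    (hlip : ∀ u v, ‖g' u - g' v‖ ≤ L * ‖u - v‖)
    (h : EuclideanSpace ℝ (Fin n) → ℝ)
    (hh : ∀ x, h x = 1 / 2 * ‖x‖ ^ 2 - g x)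
    (φ : EuclideanSpace ℝ (Fin n) → ℝ)
    (hφ : ∀ x, φ x = (⨆ y, (⟪x, y⟫ - h y)) - 1 / 2 * ‖x‖ ^ 2) :
    (∀ x, φ x ≥ g x) ∧ (∀ x, g' x = 0 → φ x = g x) := by
  obtain rfl : h = fun y => 1 / 2 * ‖y‖ ^ 2 - g y := funext hh
  have hdiag : ∀ x, ⟪x, x⟫ - (1 / 2 * ‖x‖ ^ 2 - g x) = 1 / 2 * ‖x‖ ^ 2 + g x := fun x => by
    rw [real_inner_self_eq_norm_sq]; ring
  refine ⟨fun x => ?_, fun x hx => ?_⟩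
  · have hle := le_ciSup (bddAbove_range_inner_sub_half_sq_sub hg hlip hL1 x) x
    rw [hφ, ge_iff_le]
    linarith [hdiag x]
  · have hmax : ∀ y, ⟪x, y⟫ - (1 / 2 * ‖y‖ ^ 2 - g y) ≤ ⟪x, x⟫ - (1 / 2 * ‖x‖ ^ 2 - g x) := by
      intro y
      have hbound := inner_sub_half_sq_sub_le_of_lipschitz_gradient hg hlip x y
      rw [hx, inner_zero_left] at hbound
      rw [hdiag]
      linarith [mul_nonneg (sub_nonneg.2 hL1.le) (sq_nonneg ‖y - x‖)]
    rw [hφ, le_antisymm (ciSup_le hmax) (le_ciSup ⟨_, forall_mem_range.2 hmax⟩ x), hdiag]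
    ring

/-- with `h(x) = (1/2)‖x‖² − g(x)` and
`φ(x) = sup_y (⟪x,y⟫ − h(y)) − (1/2)‖x‖²`, one has `φ(x) ≥ g(x)` for all `x`,
and `φ(x) = g(x)` whenever `∇g(x) = 0` (i.e. `x` is a fixed point of `D = Id − ∇g`). -/
theorem phi_ge_g_and_eq_at_fixed_points {n : ℕ}
    (g : EuclideanSpace ℝ (Fin n) → ℝ)
    (g' : EuclideanSpace ℝ (Fin n) → EuclideanSpace ℝ (Fin n))
    (L : ℝ) (hL0 : 0 ≤ L) (hL1 : L < 1)
    (hg : ∀ x, HasGradientAt g (g' x) x)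
    (hlip : ∀ u v, ‖g' u - g' v‖ ≤ L * ‖u - v‖)
    (h : EuclideanSpace ℝ (Fin n) → ℝ)
    (hh : ∀ x, h x = 1 / 2 * ‖x‖ ^ 2 - g x)
    (φ : EuclideanSpace ℝ (Fin n) → ℝ)
    (hφ : ∀ x, φ x = (⨆ y, (⟪x, y⟫ - h y)) - 1 / 2 * ‖x‖ ^ 2) :
    (∀ x, φ x ≥ g x) ∧ (∀ x, g' x = 0 → φ x = g x) :=
  phi_ge_g_and_eq_at_fixed_points_general g g' L hL1 hg hlip h hh φ hφ
end

section
/- Key one-step inequality for the relaxed proximal gradient algorithm αPGD: let f : ℝⁿ → ℝ be convex and differentiable with ∇f L_f-Lipschitz, let φ : ℝⁿ → ℝ be M-weakly convex (M ∈ ℝ), let α ∈ (0,1), τ > 0, and set F = f + φ. Given x_k, y_k ∈ ℝⁿ, define q_{k+1} = (1−α)y_k + α·x_k, let x_{k+1} minimize u ↦ φ(u) + (1/(2τ))‖u − (x_k − τ·∇f(q_{k+1}))‖² over ℝⁿ, and set y_{k+1} = (1−α)y_k + α·x_{k+1}. Then for every y ∈ ℝⁿ: (1/α − 1)(F(y_k)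 − F(y)) + (1/(2τ))‖y − x_k‖² ≥ (1/α)(F(y_{k+1}) − F(y)) + (1/(2τ) − α·L_f/2)‖x_{k+1} − x_k‖² + (1/(2τ) − M/2)‖x_{k+1} − y‖² − (M/2)(1−α)‖y_k − x_{k+1}‖². -/
/-!
Write `q = q_{k+1}` and `g = ∇f q`. The step combines four inequalities: the descent lemma for `f`
from `q` to `y_{k+1}`, where `y_{k+1} - q = α (x_{k+1} - x_k)`; the gradient inequality of the
convex `f` at `q`, tested at `y_k` and at `y` with weights `1 - α` and `α`; the three-point
inequality of the proximal step, which holds because the prox objective is `(1/τ - M)`-strongly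
convex with minimiser `x_{k+1}`; and weak convexity of `φ` on the segment from `y_k` to `x_{k+1}`.
Their sum is the claimed inequality multiplied by `α`.
-/

open RealInnerProductSpace Set Filter Topology

variable {E : Type*} [NormedAddCommGroup E] [InnerProductSpace ℝ E]

lemma StrongConvexOn.add {s : Set E} {m n : ℝ} {f g : E → ℝ} (hf : StrongConvexOn s m f)
    (hg : StrongConvexOn s n g) : StrongConvexOn s (m + n) (f + g) := by
  unfold StrongConvexOn at *
  convert hf.add hg using 1
  funext r
  simp only [Pi.add_apply]
  ring

lemma strongConvexOn_univ_mul_norm_sub_sq (m : ℝ) (z : E) :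
    StrongConvexOn univ m fun x ↦ m / 2 * ‖x - z‖ ^ 2 := by
  rw [strongConvexOn_iff_convex]
  have haffine : (fun x : E ↦ m / 2 * ‖x - z‖ ^ 2 - m / 2 * ‖x‖ ^ 2) =
      fun x ↦ m / 2 * ‖z‖ ^ 2 - (m • innerₛₗ ℝ z) x := by
    ext x
    rw [norm_sub_sq_real, LinearMap.smul_apply, innerₛₗ_apply_apply, real_inner_comm, smul_eq_mul]
    ring
  rw [haffine]
  exact (convexOn_const _ convex_univ).sub ((m • innerₛₗ ℝ z).concaveOn convex_univ)

lemma StrongConvexOn.add_sq_le_of_isMinOn {s : Set E} {m : ℝ} {ψ : E → ℝ} {x u : E}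
    (hψ : StrongConvexOn s m ψ) (hmin : IsMinOn ψ s x) (hx : x ∈ s) (hu : u ∈ s) :
    ψ x + m / 2 * ‖u - x‖ ^ 2 ≤ ψ u := by
  have hseg : ∀ t ∈ Ioc (0 : ℝ) 1, ψ x + (1 - t) * (m / 2 * ‖u - x‖ ^ 2) ≤ ψ u := by
    rintro t ⟨ht0, ht1⟩
    have hconv := hψ.2 hx hu (sub_nonneg.2 ht1) ht0.le (sub_add_cancel 1 t)
    have hle : ψ x ≤ ψ ((1 - t) • x + t • u) :=
      hmin (hψ.1 hx hu (sub_nonneg.2 ht1) ht0.le (sub_add_cancel 1 t))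
    rw [smul_eq_mul, smul_eq_mul, norm_sub_rev] at hconv
    refine le_of_mul_le_mul_left ?_ ht0
    linarith
  have hlim : Tendsto (fun t : ℝ ↦ ψ x + (1 - t) * (m / 2 * ‖u - x‖ ^ 2)) (𝓝[>] 0)
      (𝓝 (ψ x + m / 2 * ‖u - x‖ ^ 2)) :=
    tendsto_nhdsWithin_of_tendsto_nhds ((by fun_prop : Continuous _).tendsto' 0 _ (by simp))
  exact le_of_tendsto hlim (mem_of_superset (Ioc_mem_nhdsGT one_pos) hseg)

lemma prox_grad_three_point {φ : E → ℝ} {m τ : ℝ} {g x x' : E}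
    (hφ : StrongConvexOn univ m φ) (hτ : τ ≠ 0)
    (hx' : ∀ u, φ x' + 1 / (2 * τ) * ‖x' - (x - τ • g)‖ ^ 2 ≤
      φ u + 1 / (2 * τ) * ‖u - (x - τ • g)‖ ^ 2) (u : E) :
    φ x' + ⟪g, x' - u⟫ + 1 / (2 * τ) * ‖x' - x‖ ^ 2 + (1 / (2 * τ) + m / 2) * ‖u - x'‖ ^ 2 ≤
      φ u + 1 / (2 * τ) * ‖u - x‖ ^ 2 := by
  have hψ : StrongConvexOn univ (m + 1 / τ) fun w ↦ φ w + 1 / (2 * τ) * ‖w - (x - τ • g)‖ ^ 2 := by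
    convert hφ.add (strongConvexOn_univ_mul_norm_sub_sq (1 / τ) (x - τ • g)) using 1
    funext w
    simp only [Pi.add_apply]
    ring
  have hmin := hψ.add_sq_le_of_isMinOn (fun w _ ↦ hx' w) (mem_univ x') (mem_univ u)
  have hexpand : ∀ w, 1 / (2 * τ) * ‖w - (x - τ • g)‖ ^ 2 =
      1 / (2 * τ) * ‖w - x‖ ^ 2 + ⟪g, w - x⟫ + τ / 2 * ‖g‖ ^ 2 := by
    intro w
    rw [show w - (x - τ • g) = (w - x) + τ • g by abel, norm_add_sq_real, norm_smul,
      real_inner_smul_right, Real.norm_eq_abs, mul_pow, sq_abs, real_inner_comm]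
    field_simp
  have hinner : ⟪g, x' - u⟫ = ⟪g, x' - x⟫ - ⟪g, u - x⟫ := by
    rw [← inner_sub_right, sub_sub_sub_cancel_right]
  have hmod : (m + 1 / τ) / 2 = 1 / (2 * τ) + m / 2 := by ring
  rw [hexpand, hexpand, hmod] at hmin
  linarith

variable [CompleteSpace E]

lemma HasGradientAt.hasDerivAt_comp_add_smul {f : E → ℝ} {g q v : E} {t : ℝ}
    (hf : HasGradientAt f g (q + t • v)) :
    HasDerivAt (fun s : ℝ ↦ f (q + s • v)) ⟪g, v⟫ t := by
  have hline : HasDerivAt (fun s : ℝ ↦ q + s • v) v t := by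
    simpa using ((hasDerivAt_id t).smul_const v).const_add q
  simpa [Function.comp_def] using hf.hasFDerivAt.comp_hasDerivAt t hline

lemma ConvexOn.add_inner_le_of_hasGradientAt {f : E → ℝ} {g q : E} (hconv : ConvexOn ℝ univ f)
    (hf : HasGradientAt f g q) (w : E) : f q + ⟪g, w - q⟫ ≤ f w := by
  have hderiv : HasDerivAt (fun s : ℝ ↦ f (q + s • (w - q))) ⟪g, w - q⟫ 0 :=
    HasGradientAt.hasDerivAt_comp_add_smul (by simpa using hf)
  have hline : ConvexOn ℝ univ fun s : ℝ ↦ f (q + s • (w - q)) := by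
    have h := hconv.comp_affineMap (AffineMap.lineMap q w : ℝ →ᵃ[ℝ] E)
    simpa [Function.comp_def, AffineMap.lineMap_apply, add_comm] using h
  have hslope := hline.le_slope_of_hasDerivAt (mem_univ 0) (mem_univ 1) one_pos hderiv
  simp only [slope, sub_zero, inv_one, one_smul, zero_smul, add_zero, add_sub_cancel,
    vsub_eq_sub] at hslope
  linarith

lemma le_add_inner_add_sq_of_lipschitz_gradient {f : E → ℝ} {f' : E → E} {L : ℝ}
    (hf : ∀ x, HasGradientAt f (f' x) x) (hlip : ∀ u v, ‖f' u - f' v‖ ≤ L * ‖u - v‖)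
    (q w : E) : f w ≤ f q + ⟪f' q, w - q⟫ + L / 2 * ‖w - q‖ ^ 2 := by
  set v := w - q
  set h : ℝ → ℝ := fun t ↦ f (q + t • v) - t * ⟪f' q, v⟫ - L / 2 * ‖v‖ ^ 2 * t ^ 2 with hh
  have hderiv : ∀ t, HasDerivAt h (⟪f' (q + t • v) - f' q, v⟫ - L * ‖v‖ ^ 2 * t) t := by
    intro t
    have hf_line : HasDerivAt (fun s : ℝ ↦ f (q + s • v)) ⟪f' (q + t • v), v⟫ t :=
      (hf _).hasDerivAt_comp_add_smul
    refine ((hf_line.sub ((hasDerivAt_id t).mul_const ⟪f' q, v⟫)).sub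
      ((hasDerivAt_pow 2 t).const_mul (L / 2 * ‖v‖ ^ 2))).congr_deriv ?_
    simp only [inner_sub_left, Nat.cast_ofNat]
    ring
  have hderiv_nonpos : ∀ t ∈ interior (Icc (0 : ℝ) 1),
      ⟪f' (q + t • v) - f' q, v⟫ - L * ‖v‖ ^ 2 * t ≤ 0 := by
    intro t ht
    rw [interior_Icc] at ht
    have hcs := real_inner_le_norm (f' (q + t • v) - f' q) v
    have hL := hlip (q + t • v) q
    rw [add_sub_cancel_left, norm_smul, Real.norm_of_nonneg ht.1.le] at hL
    nlinarith [norm_nonneg v]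
  have hanti : AntitoneOn h (Icc 0 1) :=
    antitoneOn_of_hasDerivWithinAt_nonpos (convex_Icc 0 1)
      (fun t _ ↦ (hderiv t).continuousAt.continuousWithinAt)
      (fun t _ ↦ (hderiv t).hasDerivWithinAt) hderiv_nonpos
  have hend := hanti (left_mem_Icc.2 zero_le_one) (right_mem_Icc.2 zero_le_one) zero_le_one
  simp only [hh, v, zero_smul, one_smul, add_zero, add_sub_cancel, zero_mul, one_mul, mul_one,
    zero_pow two_ne_zero, one_pow, mul_zero, sub_zero] at hend
  linarith

/-- Key one-step inequality for αPGD: with `f` convex, differentiable,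
`∇f` `L_f`-Lipschitz, `φ` `M`-weakly convex, `α ∈ (0,1)`, `τ > 0`, `F = f + φ`, and one
αPGD step `q_{k+1} = (1−α)y_k + αx_k`, `x_{k+1} ∈ Prox_{τφ}(x_k − τ∇f(q_{k+1}))`,
`y_{k+1} = (1−α)y_k + αx_{k+1}`, one has for every `y`:
`(1/α − 1)(F(y_k) − F(y)) + (1/(2τ))‖y − x_k‖² ≥ (1/α)(F(y_{k+1}) − F(y))
 + (1/(2τ) − αL_f/2)‖x_{k+1} − x_k‖² + (1/(2τ) − M/2)‖x_{k+1} − y‖²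
 − (M/2)(1−α)‖y_k − x_{k+1}‖²`. -/
theorem alphaPGD_one_step_inequality {n : ℕ}
    (f : EuclideanSpace ℝ (Fin n) → ℝ)
    (f' : EuclideanSpace ℝ (Fin n) → EuclideanSpace ℝ (Fin n))
    (φ : EuclideanSpace ℝ (Fin n) → ℝ) (M L_f α τ : ℝ)
    (hf : ∀ x, HasGradientAt f (f' x) x)
    (hfconv : ConvexOn ℝ Set.univ f)
    (hlip : ∀ u v, ‖f' u - f' v‖ ≤ L_f * ‖u - v‖)
    (hφ : ConvexOn ℝ Set.univ (fun x => φ x + M / 2 * ‖x‖ ^ 2))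
    (hα : α ∈ Set.Ioo (0 : ℝ) 1) (hτ : 0 < τ)
    (F : EuclideanSpace ℝ (Fin n) → ℝ) (hF : ∀ x, F x = f x + φ x)
    (xk yk qk1 xk1 yk1 : EuclideanSpace ℝ (Fin n))
    (hq : qk1 = (1 - α) • yk + α • xk)
    (hx : ∀ u,
      φ xk1 + 1 / (2 * τ) * ‖xk1 - (xk - τ • f' qk1)‖ ^ 2 ≤
        φ u + 1 / (2 * τ) * ‖u - (xk - τ • f' qk1)‖ ^ 2)
    (hy : yk1 = (1 - α) • yk + α • xk1) :
    ∀ y : EuclideanSpace ℝ (Fin n),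
      (1 / α - 1) * (F yk - F y) + 1 / (2 * τ) * ‖y - xk‖ ^ 2 ≥
        (1 / α) * (F yk1 - F y)
        + (1 / (2 * τ) - α * L_f / 2) * ‖xk1 - xk‖ ^ 2
        + (1 / (2 * τ) - M / 2) * ‖xk1 - y‖ ^ 2
        - M / 2 * (1 - α) * ‖yk - xk1‖ ^ 2 := by
  intro y
  obtain ⟨hα0, hα1⟩ := hα
  have hφ' : StrongConvexOn univ (-M) φ :=
    strongConvexOn_iff_convex.2 (by simpa only [neg_div, neg_mul, sub_neg_eq_add] using hφ)
  have hdesc := le_add_inner_add_sq_of_lipschitz_gradient hf hlip qk1 yk1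
  have hcvx_yk := mul_le_mul_of_nonneg_left (hfconv.add_inner_le_of_hasGradientAt (hf qk1) yk)
    (sub_nonneg.2 hα1.le)
  have hcvx_y := mul_le_mul_of_nonneg_left (hfconv.add_inner_le_of_hasGradientAt (hf qk1) y)
    hα0.le
  have hprox := mul_le_mul_of_nonneg_left (prox_grad_three_point hφ' hτ.ne' hx y) hα0.le
  have hweak : φ yk1 ≤ (1 - α) * φ yk + α * φ xk1 + (1 - α) * α * (M / 2 * ‖yk - xk1‖ ^ 2) := by
    have h := hφ'.2 (mem_univ yk) (mem_univ xk1) (sub_nonneg.2 hα1.le) hα0.le (sub_add_cancel 1 α)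
    simp only [← hy, smul_eq_mul] at h
    linarith
  have hnorm : ‖yk1 - qk1‖ ^ 2 = α ^ 2 * ‖xk1 - xk‖ ^ 2 := by
    rw [show yk1 - qk1 = α • (xk1 - xk) by rw [hy, hq]; module, norm_smul, mul_pow,
      Real.norm_of_nonneg hα0.le]
  have hinner : ⟪f' qk1, yk1 - qk1⟫ =
      (1 - α) * ⟪f' qk1, yk - qk1⟫ + α * ⟪f' qk1, y - qk1⟫ + α * ⟪f' qk1, xk1 - y⟫ := by
    simp only [hy, hq, inner_sub_right, inner_add_right, real_inner_smul_right]
    ring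
  have key : F yk1 - F y + α * (1 / (2 * τ) - α * L_f / 2) * ‖xk1 - xk‖ ^ 2
      + α * (1 / (2 * τ) - M / 2) * ‖xk1 - y‖ ^ 2 - α * (M / 2 * (1 - α)) * ‖yk - xk1‖ ^ 2
      ≤ (1 - α) * (F yk - F y) + α * (1 / (2 * τ)) * ‖y - xk‖ ^ 2 := by
    rw [hnorm, hinner] at hdesc
    rw [hF, hF, hF, norm_sub_rev xk1 y]
    linarith
  rw [ge_iff_le, ← sub_nonneg]
  refine (div_nonneg (sub_nonneg.2 key) hα0.le).trans_eq ?_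
  field_simp
end

section
/- One-step decrease of the Douglas–Rachford envelope for ProxPnP-DRS: let 0 ≤ L < 1, let φ : ℝⁿ → ℝ be differentiable, M-weakly convex with M = L/(L+1), and with ∇φ (L/(1−L))-Lipschitz; let f : ℝⁿ → ℝ, λ > 0, β ∈ (0,1). Define F^{DR}(x,y,z) = λf(z) + φ(y) + ⟨y−x, y−z⟩ + (1/2)‖y−z‖². Let the sequences (x_k), (y_k), (z_k) satisfy, for each k: y_{k+1} is the unique minimizer over ℝⁿ of u ↦ φ(u) + (1/2)‖u − x_k‖²; z_{k+1} is a minimizer over ℝⁿ of u ↦ λf(u) + (1/2)‖u − (2y_{k+1} − x_k)‖²; x_{k+1} = x_k + 2β(z_{k+1} − y_{k+1}). Then for all k ≥ 1, F^{DR}(x_k, y_{k+1}, z_{k+1}) − F^{DR}(x_{k−1}, y_k, z_k) ≤ (1/2)·( 1 + M + (1/β)( L²/(1−L)² − 1 ) )·‖y_{k+1} − y_k‖². In particular, if β(2L³ − 3L² + 1) + (2L² + L − 1) < 0, then F^{DR}(x_k, y_{k+1}, z_{k+1}) ≤ F^{DR}(x_{k−1}, y_k, z_k), for any value of λ > 0.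 -/
/-!
Write the envelope as `F(x,y,z) = λf(z) + ½‖z − (2y − x)‖² + φ(y) − ½‖y − x‖²`, so the `z`-update
can only decrease it. For the `(x, y)`-update, optimality of the prox gives `∇φ(y_{k+1}) = x_k − y_{k+1}`;
weak convexity then bounds `φ(y_{k+1}) − φ(y_k)`, and since `x_k − x_{k−1} = 2β(z_k − y_k)` the
remaining quadratic terms collapse to
`(1/2β)‖∇φ(y_{k+1}) − ∇φ(y_k)‖² + (½ − 1/2β)‖y_{k+1} − y_k‖²`,
which the Lipschitz bound on `∇φ` turns into the stated coefficient. Multiplied by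
`β(L + 1)(1 − L)²`, that coefficient becomes `β(2L³ − 3L² + 1) + 2L² + L − 1`.
-/

open RealInnerProductSpace

theorem ConvexOn.add_fderiv_sub_le {E : Type*} [NormedAddCommGroup E] [NormedSpace ℝ E]
    {h : E → ℝ} {D : E →L[ℝ] ℝ} {y : E} (hc : ConvexOn ℝ Set.univ h) (hD : HasFDerivAt h D y)
    (u : E) : h y + D (u - y) ≤ h u := by
  have hline : ConvexOn ℝ Set.univ (h ∘ AffineMap.lineMap (k := ℝ) y u) := by
    simpa using hc.comp_affineMap (AffineMap.lineMap (k := ℝ) y u)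
  have hderiv : HasDerivAt (h ∘ AffineMap.lineMap (k := ℝ) y u) (D (u - y)) (0 : ℝ) := by
    refine HasFDerivAt.comp_hasDerivAt (0 : ℝ) ?_ AffineMap.hasDerivAt_lineMap
    simpa using hD
  have := hline.le_slope_of_hasDerivAt (Set.mem_univ 0) (Set.mem_univ 1) zero_lt_one hderiv
  simpa [slope_def_field, le_sub_iff_add_le'] using this

section Gradient

variable {E : Type*} [NormedAddCommGroup E] [InnerProductSpace ℝ E] [CompleteSpace E]

theorem HasGradientAt.add_half_mul_norm_sub_sq {φ : E → ℝ} {g y : E} (hφ : HasGradientAt φ g y)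
    (c : ℝ) (x : E) :
    HasGradientAt (fun u => φ u + c / 2 * ‖u - x‖ ^ 2) (g + c • (y - x)) y := by
  rw [hasGradientAt_iff_hasFDerivAt]
  refine (hφ.hasFDerivAt.add
    (((hasFDerivAt_id y).sub_const x).norm_sq.const_mul (c / 2))).congr_fderiv ?_
  ext v
  simp only [id_eq, map_sub, ContinuousLinearMap.comp_id, add_apply,
    InnerProductSpace.toDual_apply_apply, smul_apply, sub_apply, coe_innerSL_apply, nsmul_eq_mul,
    Nat.cast_ofNat, smul_eq_mul, map_add, map_smul, add_right_inj]
  ring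

theorem HasGradientAt.sub_le_of_convexOn_add_sq {φ : E → ℝ} {g y : E} {M : ℝ}
    (hφ : HasGradientAt φ g y) (hwc : ConvexOn ℝ Set.univ (fun x => φ x + M / 2 * ‖x‖ ^ 2))
    (u : E) : φ y - φ u ≤ ⟪g, y - u⟫ + M / 2 * ‖y - u‖ ^ 2 := by
  have hψ := (hφ.add_half_mul_norm_sub_sq M 0).hasFDerivAt
  simp only [sub_zero] at hψ
  have hfirst := hwc.add_fderiv_sub_le hψ u
  rw [InnerProductSpace.toDual_apply_apply, inner_add_left, real_inner_smul_left] at hfirst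
  have hsq : ‖u‖ ^ 2 = ‖y‖ ^ 2 + 2 * ⟪y, u - y⟫ + ‖y - u‖ ^ 2 := by
    simp only [← real_inner_self_eq_norm_sq, inner_sub_left, inner_sub_right, real_inner_comm]
    ring
  have hneg : ⟪g, y - u⟫ = -⟪g, u - y⟫ := by rw [← inner_neg_right, neg_sub]
  linear_combination hfirst + M / 2 * hsq - hneg

theorem HasGradientAt.eq_sub_of_isLocalMin_prox {φ : E → ℝ} {g x y : E}
    (hφ : HasGradientAt φ g y) (hmin : IsLocalMin (fun u => φ u + 1 / 2 * ‖u - x‖ ^ 2) y) :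
    g = x - y := by
  have hψ := hφ.add_half_mul_norm_sub_sq 1 x
  rw [one_smul] at hψ
  have h0 : g + (y - x) = 0 :=
    (map_eq_zero_iff _ (InnerProductSpace.toDual ℝ E).injective).mp
      (hmin.hasFDerivAt_eq_zero hψ.hasFDerivAt)
  rw [← sub_eq_zero, ← h0]
  abel

end Gradient

section Envelope

variable {E : Type*} [NormedAddCommGroup E] [InnerProductSpace ℝ E]

noncomputable def drEnvelope (lam : ℝ) (f φ : E → ℝ) (x y z : E) : ℝ :=
  lam * f z + φ y + ⟪y - x, y - z⟫ + 1 / 2 * ‖y - z‖ ^ 2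

theorem drEnvelope_eq (lam : ℝ) (f φ : E → ℝ) (x y z : E) :
    drEnvelope lam f φ x y z =
      lam * f z + 1 / 2 * ‖z - (2 • y - x)‖ ^ 2 + φ y - 1 / 2 * ‖y - x‖ ^ 2 := by
  have : z - (2 • y - x) = (z - y) - (y - x) := by rw [two_smul]; abel
  rw [drEnvelope, this, ← neg_sub z y, norm_neg, inner_neg_right, norm_sub_sq_real (z - y) (y - x),
    real_inner_comm]
  ring

theorem drEnvelope_z_step_le {lam : ℝ} {f φ : E → ℝ} {x y z z' : E}
    (hz : lam * f z' + 1 / 2 * ‖z' - (2 • y - x)‖ ^ 2 ≤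
      lam * f z + 1 / 2 * ‖z - (2 • y - x)‖ ^ 2) :
    drEnvelope lam f φ x y z' ≤ drEnvelope lam f φ x y z := by
  rw [drEnvelope_eq, drEnvelope_eq]
  linarith

theorem drEnvelope_xy_step_le {lam s M : ℝ} {f φ : E → ℝ} {x₀ x₁ y₀ y₁ z : E} (hs : s ≠ 0)
    (hx : x₁ = x₀ + s • (z - y₀))
    (hφ : φ y₁ - φ y₀ ≤ ⟪x₁ - y₁, y₁ - y₀⟫ + M / 2 * ‖y₁ - y₀‖ ^ 2) :
    drEnvelope lam f φ x₁ y₁ z - drEnvelope lam f φ x₀ y₀ z ≤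
      (1 / 2 + M / 2 - 1 / s) * ‖y₁ - y₀‖ ^ 2 + 1 / s * ‖(x₁ - y₁) - (x₀ - y₀)‖ ^ 2 := by
  have hres : (x₁ - y₁) - (x₀ - y₀) = s • (z - y₀) - (y₁ - y₀) := by rw [hx]; abel
  have hquad : ⟪x₁ - y₁, y₁ - y₀⟫ + ⟪y₁ - x₁, y₁ - z⟫ + 1 / 2 * ‖y₁ - z‖ ^ 2
      - ⟪y₀ - x₀, y₀ - z⟫ - 1 / 2 * ‖y₀ - z‖ ^ 2 =
        1 / s * ‖s • (z - y₀) - (y₁ - y₀)‖ ^ 2 + (1 / 2 - 1 / s) * ‖y₁ - y₀‖ ^ 2 := by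
    subst hx
    simp only [← real_inner_self_eq_norm_sq, inner_sub_left, inner_sub_right, inner_add_left,
      real_inner_smul_right, real_inner_comm]
    field_simp
    ring
  rw [drEnvelope, drEnvelope, hres]
  linarith

variable [CompleteSpace E]

theorem drEnvelope_step_le {lam β M K : ℝ} {f φ : E → ℝ} {φ' : E → E} {x₀ x₁ y₀ y₁ z₀ z₁ : E}
    (hβ : 0 < β) (hφ : HasGradientAt φ (φ' y₁) y₁)
    (hwc : ConvexOn ℝ Set.univ (fun x => φ x + M / 2 * ‖x‖ ^ 2))
    (hlip : ‖φ' y₁ - φ' y₀‖ ≤ K * ‖y₁ - y₀‖)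
    (hy₀ : φ' y₀ = x₀ - y₀) (hy₁ : φ' y₁ = x₁ - y₁) (hx : x₁ = x₀ + (2 * β) • (z₀ - y₀))
    (hz : lam * f z₁ + 1 / 2 * ‖z₁ - (2 • y₁ - x₁)‖ ^ 2 ≤
      lam * f z₀ + 1 / 2 * ‖z₀ - (2 • y₁ - x₁)‖ ^ 2) :
    drEnvelope lam f φ x₁ y₁ z₁ - drEnvelope lam f φ x₀ y₀ z₀ ≤
      1 / 2 * (1 + M + 1 / β * (K ^ 2 - 1)) * ‖y₁ - y₀‖ ^ 2 := by
  have hz_step := drEnvelope_z_step_le (φ := φ) hz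
  have hweak := hφ.sub_le_of_convexOn_add_sq hwc y₀
  rw [hy₁] at hweak
  have hxy_step := drEnvelope_xy_step_le (lam := lam) (f := f) (by positivity) hx hweak
  rw [hy₀, hy₁] at hlip
  have hinv : 0 ≤ 1 / (2 * β) := by positivity
  calc _ ≤ (1 / 2 + M / 2 - 1 / (2 * β)) * ‖y₁ - y₀‖ ^ 2 +
        1 / (2 * β) * ‖(x₁ - y₁) - (x₀ - y₀)‖ ^ 2 := by linarith
    _ ≤ (1 / 2 + M / 2 - 1 / (2 * β)) * ‖y₁ - y₀‖ ^ 2 + 1 / (2 * β) * (K * ‖y₁ - y₀‖) ^ 2 := by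
      gcongr
    _ = _ := by ring

end Envelope

theorem one_add_div_add_one_div_mul_eq {L β : ℝ} (hL : L + 1 ≠ 0) (hL1 : 1 - L ≠ 0) (hβ : β ≠ 0) :
    1 + L / (L + 1) + 1 / β * (L ^ 2 / (1 - L) ^ 2 - 1) =
      (β * (2 * L ^ 3 - 3 * L ^ 2 + 1) + (2 * L ^ 2 + L - 1)) /
        (β * ((L + 1) * (1 - L) ^ 2)) := by
  field_simp
  ring

theorem proxPnP_DRS_envelope_decrease_general {n : ℕ}
    (f : EuclideanSpace ℝ (Fin n) → ℝ)
    (φ : EuclideanSpace ℝ (Fin n) → ℝ)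
    (φ' : EuclideanSpace ℝ (Fin n) → EuclideanSpace ℝ (Fin n))
    (L M lam β : ℝ) (hL0 : 0 ≤ L) (hL1 : L < 1) (hM : M = L / (L + 1))
    (hφdiff : ∀ x, HasGradientAt φ (φ' x) x)
    (hφwc : ConvexOn ℝ Set.univ (fun x => φ x + M / 2 * ‖x‖ ^ 2))
    (hφlip : ∀ u v, ‖φ' u - φ' v‖ ≤ L / (1 - L) * ‖u - v‖)
    (hβ : β ∈ Set.Ioo (0 : ℝ) 1)
    (FDR : EuclideanSpace ℝ (Fin n) → EuclideanSpace ℝ (Fin n) →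
      EuclideanSpace ℝ (Fin n) → ℝ)
    (hFDR : ∀ x y z, FDR x y z =
      lam * f z + φ y + ⟪y - x, y - z⟫ + 1 / 2 * ‖y - z‖ ^ 2)
    (x y z : ℕ → EuclideanSpace ℝ (Fin n))
    (hy : ∀ k, ∀ u,
      φ (y (k + 1)) + 1 / 2 * ‖y (k + 1) - x k‖ ^ 2 ≤
        φ u + 1 / 2 * ‖u - x k‖ ^ 2)
    (hz : ∀ k, ∀ u,
      lam * f (z (k + 1)) + 1 / 2 * ‖z (k + 1) - (2 • y (k + 1) - x k)‖ ^ 2 ≤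
        lam * f u + 1 / 2 * ‖u - (2 • y (k + 1) - x k)‖ ^ 2)
    (hxs : ∀ k, x (k + 1) = x k + (2 * β) • (z (k + 1) - y (k + 1))) :
    (∀ k : ℕ, 1 ≤ k →
      FDR (x k) (y (k + 1)) (z (k + 1)) - FDR (x (k - 1)) (y k) (z k) ≤
        1 / 2 * (1 + M + 1 / β * (L ^ 2 / (1 - L) ^ 2 - 1)) * ‖y (k + 1) - y k‖ ^ 2) ∧
    (β * (2 * L ^ 3 - 3 * L ^ 2 + 1) + (2 * L ^ 2 + L - 1) < 0 →
      ∀ k : ℕ, 1 ≤ k →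
        FDR (x k) (y (k + 1)) (z (k + 1)) ≤ FDR (x (k - 1)) (y k) (z k)) := by
  obtain rfl : FDR = drEnvelope lam f φ := by funext x y z; exact hFDR x y z
  have hprox (k : ℕ) : φ' (y (k + 1)) = x k - y (k + 1) :=
    (hφdiff _).eq_sub_of_isLocalMin_prox (.of_forall (hy k))
  have hdecr : ∀ k : ℕ, 1 ≤ k →
      drEnvelope lam f φ (x k) (y (k + 1)) (z (k + 1)) -
          drEnvelope lam f φ (x (k - 1)) (y k) (z k) ≤
        1 / 2 * (1 + M + 1 / β * (L ^ 2 / (1 - L) ^ 2 - 1)) * ‖y (k + 1) - y k‖ ^ 2 := by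
    intro k hk
    obtain ⟨m, rfl⟩ := Nat.exists_eq_add_of_le' hk
    rw [← div_pow]
    exact drEnvelope_step_le hβ.1 (hφdiff _) hφwc (hφlip _ _) (hprox m) (hprox (m + 1)) (hxs m)
      (hz (m + 1) _)
  refine ⟨hdecr, fun hneg k hk => ?_⟩
  have hcoef : 1 / 2 * (1 + M + 1 / β * (L ^ 2 / (1 - L) ^ 2 - 1)) ≤ 0 := by
    rw [hM, one_add_div_add_one_div_mul_eq (by linarith) (by linarith) hβ.1.ne']
    have hden : 0 ≤ β * ((L + 1) * (1 - L) ^ 2) :=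
      mul_nonneg hβ.1.le (mul_nonneg (by linarith) (sq_nonneg _))
    linarith [div_nonpos_of_nonpos_of_nonneg hneg.le hden]
  linarith [hdecr k hk, mul_nonpos_of_nonpos_of_nonneg hcoef (sq_nonneg ‖y (k + 1) - y k‖)]

/-- One-step decrease of the Douglas–Rachford envelope for ProxPnP-DRS:
with `0 ≤ L < 1`, `φ` differentiable, `M`-weakly convex with `M = L/(L+1)`, `∇φ`
`(L/(1−L))`-Lipschitz; `f : ℝⁿ → ℝ`, `λ > 0`, `β ∈ (0,1)`;
`F^{DR}(x,y,z) = λf(z) + φ(y) + ⟪y−x, y−z⟫ + (1/2)‖y−z‖²`; and DRS iterates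
(`y_{k+1}` the unique minimizer of `u ↦ φ(u) + (1/2)‖u − x_k‖²`, `z_{k+1}` a minimizer of
`u ↦ λf(u) + (1/2)‖u − (2y_{k+1} − x_k)‖²`, `x_{k+1} = x_k + 2β(z_{k+1} − y_{k+1})`):
for all `k ≥ 1`,
`F^{DR}(x_k, y_{k+1}, z_{k+1}) − F^{DR}(x_{k−1}, y_k, z_k)
  ≤ (1/2)(1 + M + (1/β)(L²/(1−L)² − 1))‖y_{k+1} − y_k‖²`;
in particular, if `β(2L³ − 3L² + 1) + (2L² + L − 1) < 0`, then
`F^{DR}(x_k, y_{k+1}, z_{k+1}) ≤ F^{DR}(x_{k−1}, y_k, z_k)`, for any `λ > 0`. -/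
theorem proxPnP_DRS_envelope_decrease {n : ℕ}
    (f : EuclideanSpace ℝ (Fin n) → ℝ)
    (φ : EuclideanSpace ℝ (Fin n) → ℝ)
    (φ' : EuclideanSpace ℝ (Fin n) → EuclideanSpace ℝ (Fin n))
    (L M lam β : ℝ) (hL0 : 0 ≤ L) (hL1 : L < 1) (hM : M = L / (L + 1))
    (hφdiff : ∀ x, HasGradientAt φ (φ' x) x)
    (hφwc : ConvexOn ℝ Set.univ (fun x => φ x + M / 2 * ‖x‖ ^ 2))
    (hφlip : ∀ u v, ‖φ' u - φ' v‖ ≤ L / (1 - L) * ‖u - v‖)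
    (hlam : 0 < lam) (hβ : β ∈ Set.Ioo (0 : ℝ) 1)
    (FDR : EuclideanSpace ℝ (Fin n) → EuclideanSpace ℝ (Fin n) →
      EuclideanSpace ℝ (Fin n) → ℝ)
    (hFDR : ∀ x y z, FDR x y z =
      lam * f z + φ y + ⟪y - x, y - z⟫ + 1 / 2 * ‖y - z‖ ^ 2)
    (x y z : ℕ → EuclideanSpace ℝ (Fin n))
    (hy : ∀ k, ∀ u,
      φ (y (k + 1)) + 1 / 2 * ‖y (k + 1) - x k‖ ^ 2 ≤
        φ u + 1 / 2 * ‖u - x k‖ ^ 2)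
    (hyuniq : ∀ k, ∀ u,
      (∀ w, φ u + 1 / 2 * ‖u - x k‖ ^ 2 ≤ φ w + 1 / 2 * ‖w - x k‖ ^ 2) → u = y (k + 1))
    (hz : ∀ k, ∀ u,
      lam * f (z (k + 1)) + 1 / 2 * ‖z (k + 1) - (2 • y (k + 1) - x k)‖ ^ 2 ≤
        lam * f u + 1 / 2 * ‖u - (2 • y (k + 1) - x k)‖ ^ 2)
    (hxs : ∀ k, x (k + 1) = x k + (2 * β) • (z (k + 1) - y (k + 1))) :
    (∀ k : ℕ, 1 ≤ k →
      FDR (x k) (y (k + 1)) (z (k + 1)) - FDR (x (k - 1)) (y k) (z k) ≤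
        1 / 2 * (1 + M + 1 / β * (L ^ 2 / (1 - L) ^ 2 - 1)) * ‖y (k + 1) - y k‖ ^ 2) ∧
    (β * (2 * L ^ 3 - 3 * L ^ 2 + 1) + (2 * L ^ 2 + L - 1) < 0 →
      ∀ k : ℕ, 1 ≤ k →
        FDR (x k) (y (k + 1)) (z (k + 1)) ≤ FDR (x (k - 1)) (y k) (z k)) :=
  proxPnP_DRS_envelope_decrease_general f φ φ' L M lam β hL0 hL1 hM hφdiff hφwc hφlip hβ FDR hFDR x
    y z hy hz hxs
end
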